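/- (Adams' Riesz potential estimate in dimension 4, weak form.) For 0 < β < λ ≤ 4, there exists C > 0 such that if f ∈ M^{1,λ}(ℝ⁴), then I_β(f) lies in the weak Morrey space M_*^{λ/(λ−β), λ}(ℝ⁴) and ‖I_β(f)‖_{M_*^{λ/(λ−β),λ}(ℝ⁴)} ≤ C ‖f‖_{M^{1,λ}(ℝ⁴)}. -/

import Mathlib

open MeasureTheory Metric Set Filter Topology Bornology
open scoped ENNReal RealInnerProductSpace

noncomputable section

abbrev E4 := EuclideanSpace ℝ (Fin 4)
abbrev EK (K : ℕ) := EuclideanSpace ℝ (Fin K)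

/-- the `i`-th coordinate direction in `ℝ⁴` -/
def e4 (i : Fin 4) : E4 := EuclideanSpace.single i 1

/-- first partial derivative in the `i`-th coordinate direction -/
def pd {F : Type*} [NormedAddCommGroup F] [NormedSpace ℝ F]
    (u : E4 → F) (x : E4) (i : Fin 4) : F :=
  fderiv ℝ u x (e4 i)

/-- second directional derivative -/
def d2 {F : Type*} [NormedAddCommGroup F] [NormedSpace ℝ F]
    (u : E4 → F) (x v w : E4) : F :=
  iteratedFDeriv ℝ 2 u x ![v, w]

/-- the (componentwise) Laplacian on `ℝ⁴` -/
def lap {F : Type*} [NormedAddCommGroup F] [NormedSpace ℝ F]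
    (u : E4 → F) (x : E4) : F :=
  ∑ i : Fin 4, d2 u x (e4 i) (e4 i)

/-- the bi-Laplacian `Δ²` -/
def bilap {F : Type*} [NormedAddCommGroup F] [NormedSpace ℝ F]
    (u : E4 → F) : E4 → F :=
  lap (lap u)

/-- A compact target manifold `N ⊆ ℝ^K` (without boundary), recorded together with the
(smoothly extended) family of orthogonal projections `ℙ(y) : ℝ^K → T_yN`. -/
structure CompactTarget (K : ℕ) where
  carrier : Set (EK K)
  isCompact : IsCompact carrier
  nonempty : carrier.Nonempty
  proj : EK K → (EK K →L[ℝ] EK K)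
  proj_smooth : ContDiff ℝ (⊤ : ℕ∞) proj
  proj_idem : ∀ y ∈ carrier, (proj y).comp (proj y) = proj y
  proj_symm : ∀ y ∈ carrier, ∀ a b : EK K, ⟪proj y a, b⟫ = ⟪a, proj y b⟫

variable {K : ℕ}

/-- the second fundamental form term `𝔹(u)(∇u,∇u) = -∑_α (∇_{∂_α u} ℙ)(u) (∂_α u)` -/
def sffTerm (N : CompactTarget K) (u : E4 → EK K) (x : E4) : EK K :=
  -∑ i : Fin 4, (fderiv ℝ N.proj (u x) (pd u x i)) (pd u x i)

/-- `u` is an approximate biharmonic map to `N` on `Ω` with bi-tension field `h`, i.e.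
`Δ²u = Δ(𝔹(u)(∇u,∇u)) + 2∇·⟨Δu, ∇(ℙ(u))⟩ − ⟨Δ(ℙ(u)), Δu⟩ + h` holds in the sense of
distributions on `Ω`, and `u(x) ∈ N` a.e. -/
def IsApproxBiharmonic (N : CompactTarget K) (Ω : Set E4) (u h : E4 → EK K) : Prop :=
  (∀ᵐ x ∂(volume.restrict Ω), u x ∈ N.carrier) ∧
  ∀ φ : E4 → ℝ, ContDiff ℝ (⊤ : ℕ∞) φ → HasCompactSupport φ → tsupport φ ⊆ Ω →
    ∫ x in Ω, bilap φ x • u x =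
      (∫ x in Ω, lap φ x • sffTerm N u x)
      - (2:ℝ) • (∫ x in Ω, ∑ i : Fin 4,
          pd φ x i • (fderiv ℝ (fun y => N.proj (u y)) x (e4 i)) (lap u x))
      + ∫ x in Ω, φ x • (h x - (lap (fun y => N.proj (u y)) x) (lap u x))

/-- a biharmonic map to `N` defined on all of `ℝ⁴` -/
def IsBiharmonicMap (N : CompactTarget K) (ω : E4 → EK K) : Prop :=
  IsApproxBiharmonic N univ ω 0

/-- the `L^p(Ω)` norm -/
def LpNormOn {F : Type*} [NormedAddCommGroup F] (Ω : Set E4) (f : E4 → F) (p : ℝ) : ℝ :=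
  (eLpNorm f (ENNReal.ofReal p) (volume.restrict Ω)).toReal

/-- membership in `L^p(Ω)` -/
def MemLpOn {F : Type*} [NormedAddCommGroup F] (Ω : Set E4) (f : E4 → F) (p : ℝ) : Prop :=
  MemLp f (ENNReal.ofReal p) (volume.restrict Ω)

def gradNorm (u : E4 → EK K) (x : E4) : ℝ := ‖fderiv ℝ u x‖
def hessNorm (u : E4 → EK K) (x : E4) : ℝ := ‖iteratedFDeriv ℝ 2 u x‖

/-- membership in the Sobolev space `W^{2,2}(Ω)` -/
def MemW22 (Ω : Set E4) (u : E4 → EK K) : Prop :=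
  MemLpOn Ω u 2 ∧ MemLpOn Ω (fun x => fderiv ℝ u x) 2 ∧
    MemLpOn Ω (fun x => iteratedFDeriv ℝ 2 u x) 2

/-- the `W^{2,2}(Ω)` norm -/
def W22Norm (Ω : Set E4) (u : E4 → EK K) : ℝ :=
  LpNormOn Ω u 2 + LpNormOn Ω (fun x => fderiv ℝ u x) 2
    + LpNormOn Ω (fun x => iteratedFDeriv ℝ 2 u x) 2

/-- membership in the Sobolev space `W^{4,p}(Ω)` -/
def MemW4p (Ω : Set E4) (u : E4 → EK K) (p : ℝ) : Prop :=
  ∀ j : ℕ, j ≤ 4 → MemLpOn Ω (fun x => iteratedFDeriv ℝ j u x) p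

/-- weak convergence in `L^p(Ω)` (tested against `L^{p'}` functions, `p' = p/(p-1)`) -/
def WeakConvLp (Ω : Set E4) (p : ℝ) (f : ℕ → E4 → EK K) (g : E4 → EK K) : Prop :=
  ∀ φ : E4 → EK K, MemLpOn Ω φ (p / (p - 1)) →
    Tendsto (fun k => ∫ x in Ω, ⟪f k x, φ x⟫) atTop (𝓝 (∫ x in Ω, ⟪g x, φ x⟫))

/-- weak convergence in `W^{2,2}(Ω)` -/
def WeakConvW22 (Ω : Set E4) (f : ℕ → E4 → EK K) (g : E4 → EK K) : Prop :=
  WeakConvLp Ω 2 f g ∧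
  (∀ v : E4, WeakConvLp Ω 2 (fun k x => fderiv ℝ (f k) x v) (fun x => fderiv ℝ g x v)) ∧
  (∀ v w : E4, WeakConvLp Ω 2 (fun k x => d2 (f k) x v w) (fun x => d2 g x v w))

/-- strong convergence in `W^{2,2}_loc ∩ C⁰_loc(U)` -/
def StrongW22C0Loc (U : Set E4) (f : ℕ → E4 → EK K) (g : E4 → EK K) : Prop :=
  ∀ S : Set E4, IsCompact S → S ⊆ U →
    (Tendsto (fun k => LpNormOn S (fun x => f k x - g x) 2
        + LpNormOn S (fun x => fderiv ℝ (f k) x - fderiv ℝ g x) 2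
        + LpNormOn S (fun x => iteratedFDeriv ℝ 2 (f k) x - iteratedFDeriv ℝ 2 g x) 2)
      atTop (𝓝 0)) ∧
    (∀ ε > 0, ∃ k₀ : ℕ, ∀ k ≥ k₀, ∀ x ∈ S, ‖f k x - g x‖ ≤ ε)

/-- the hessian energy `∫_Ω |∇²u|²` -/
def hessEnergy (Ω : Set E4) (u : E4 → EK K) : ℝ := ∫ x in Ω, hessNorm u x ^ 2

/-- the `L⁴` gradient energy `∫_Ω |∇u|⁴` -/
def gradEnergy4 (Ω : Set E4) (u : E4 → EK K) : ℝ := ∫ x in Ω, gradNorm u x ^ 4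

/-- `ω` is a nonconstant map -/
def Nontriv (ω : E4 → EK K) : Prop := ¬ ∃ c : EK K, ∀ x, ω x = c

/-- `r_i = (1/2) min_{j ≠ i} { |x_i − x_j|, dist(x_i, ∂Ω) }` -/
def neckRadius (Ω : Set E4) {L : ℕ} (x : Fin L → E4) (i : Fin L) : ℝ :=
  (1/2) * sInf (insert (Metric.infDist (x i) Ωᶜ)
    {d : ℝ | ∃ j : Fin L, j ≠ i ∧ d = dist (x i) (x j)})

/-- all the bubble data at a blow-up point: finitely many nontrivial smooth biharmonic maps
`ℝ⁴ → N` with finite hessian energy -/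
def IsBubbleFamily (N : CompactTarget K) (L : ℕ) (ω : Fin L → E4 → EK K) : Prop :=
  ∀ j, ContDiff ℝ (⊤ : ℕ∞) (ω j) ∧ IsBiharmonicMap N (ω j) ∧ Nontriv (ω j) ∧
    Integrable (fun x => hessNorm (ω j) x ^ 2) volume ∧
    Integrable (fun x => gradNorm (ω j) x ^ 4) volume

/-! ### Morrey spaces, weak Morrey spaces and Riesz potentials on `ℝ⁴` -/

/-- the set of values `r^{λ-4} ∫_{B_r(x)} |f|^p` over balls `B_r(x) ⊆ U` -/
def morreySet (U : Set E4) (p lam : ℝ) (f : E4 → ℝ) : Set ℝ :=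
  {v | ∃ (x : E4) (r : ℝ), 0 < r ∧ ball x r ⊆ U ∧
        v = r ^ (lam - 4) * ∫ y in ball x r, |f y| ^ p}

/-- membership in the Morrey space `M^{p,λ}(U)` -/
def MemMorrey (U : Set E4) (p lam : ℝ) (f : E4 → ℝ) : Prop :=
  MemLpOn U f p ∧ BddAbove (morreySet U p lam f)

/-- the Morrey norm `‖f‖_{M^{p,λ}(U)}` -/
def morreyNorm (U : Set E4) (p lam : ℝ) (f : E4 → ℝ) : ℝ :=
  sSup (morreySet U p lam f) ^ (1/p)

/-- the Riesz potential `I_β(f)(x) = ∫ f(y)/|x-y|^{4-β} dy` -/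
def riesz (β : ℝ) (f : E4 → ℝ) (x : E4) : ℝ :=
  ∫ y : E4, f y / ‖x - y‖ ^ (4 - β)

/-- values `t · vol{|f| > t}^{1/p}`, whose supremum is the weak `L^p` norm on `s` -/
def weakLpSet (s : Set E4) (p : ℝ) (f : E4 → ℝ) : Set ℝ :=
  {v | ∃ t : ℝ, 0 < t ∧ v = t * (volume {x ∈ s | t < |f x|}).toReal ^ (1/p)}

/-- the weak (Marcinkiewicz) `L^p` norm `‖f‖_{L^{p,∞}(s)}` -/
def weakLpNorm (s : Set E4) (p : ℝ) (f : E4 → ℝ) : ℝ := sSup (weakLpSet s p f)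

/-- the set of values `r^{λ-4} ‖f‖_{L^{p,∞}(B_r(x))}^p` over balls `B_r(x) ⊆ U` -/
def weakMorreySet (U : Set E4) (p lam : ℝ) (f : E4 → ℝ) : Set ℝ :=
  {v | ∃ (x : E4) (r : ℝ), 0 < r ∧ ball x r ⊆ U ∧
        v = r ^ (lam - 4) * weakLpNorm (ball x r) p f ^ p}

/-- membership in the weak Morrey space `M_*^{p,λ}(U)` -/
def MemWeakMorrey (U : Set E4) (p lam : ℝ) (f : E4 → ℝ) : Prop :=
  AEStronglyMeasurable f (volume.restrict U) ∧
  (∀ (x : E4) (r : ℝ), 0 < r → ball x r ⊆ U → BddAbove (weakLpSet (ball x r) p f)) ∧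
  BddAbove (weakMorreySet U p lam f)

/-- the weak Morrey norm `‖f‖_{M_*^{p,λ}(U)}` -/
def weakMorreyNorm (U : Set E4) (p lam : ℝ) (f : E4 → ℝ) : ℝ :=
  sSup (weakMorreySet U p lam f) ^ (1/p)

/-! ### radial and tangential derivatives -/

/-- the unit radial vector `x/|x|` -/
def radialUnit (x : E4) : E4 := ‖x‖⁻¹ • x

/-- the radial derivative `∂u/∂r` -/
def ur (u : E4 → EK K) (x : E4) : EK K := fderiv ℝ u x (radialUnit x)

/-- the second radial derivative `∂²u/∂r²` -/
def urr (u : E4 → EK K) (x : E4) : EK K := d2 u x (radialUnit x) (radialUnit x)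

/-- `|∇³u|` -/
def grad3Norm (u : E4 → EK K) (x : E4) : ℝ := ‖iteratedFDeriv ℝ 3 u x‖

/-- `|∇_T ∇u|²`, the squared norm of the tangential component
`∇²u − r̂ ⊗ ∂_r(∇u)` of the hessian -/
def tangHessSq (u : E4 → EK K) (x : E4) : ℝ :=
  ∑ i : Fin 4, ∑ j : Fin 4,
    ‖d2 u x (e4 i) (e4 j) - ⟪e4 i, radialUnit x⟫ • d2 u x (radialUnit x) (e4 j)‖ ^ 2

/-!
Hedberg's splitting. Let `ν = |f| dx`, so that `ν (B(x, s)) ≤ M s^(4-λ)` with `M = ‖f‖_{M^{1,λ}}`.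
Summing the kernel over dyadic shells around `x`, the part of `I_β ν (x)` coming from outside
`B(x, δ)` is at most `C M δ^(β-λ)`, while `∫_{B(y, δ)} |x - y|^(β-4) dx ≤ C δ^β`. For a level `t`
choose `δ` so that the outer part is `t/2`. If `δ < r`, Chebyshev's inequality and Fubini bound the
measure of `{x ∈ B(x₀, r) : I_β ν (x) > t}` by `(2/t) C δ^β ν (B(x₀, 2r))`, otherwise we bound it
by `|B(x₀, r)|`. Both are `≤ A (M/t)^(λ/(λ-β)) r^(4-λ)`, which is the weak Morrey bound. Only the
upper bound `|B(x, s)| ≤ V s^n` on the volume of balls enters, so the argument works in any metric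
measure space with this property.
-/

namespace Adams

theorem mul_two_zpow_rpow {δ : ℝ} (hδ : 0 < δ) (s : ℝ) (n : ℤ) :
    (δ * 2 ^ n) ^ s = δ ^ s * (2 ^ s) ^ n := by
  rw [Real.mul_rpow hδ.le (by positivity), ← Real.rpow_intCast, ← Real.rpow_intCast,
    ← Real.rpow_mul (by norm_num), ← Real.rpow_mul (by norm_num), mul_comm (n : ℝ)]

theorem dyadic_term_eq {δ : ℝ} (hδ : 0 < δ) (γ a : ℝ) (n : ℤ) :
    (δ * 2 ^ n) ^ (-γ) * (δ * 2 ^ (n + 1)) ^ a = 2 ^ a * δ ^ (a - γ) * (2 ^ (a - γ)) ^ n := by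
  rw [mul_two_zpow_rpow hδ, mul_two_zpow_rpow hδ, sub_eq_add_neg, Real.rpow_add hδ,
    Real.rpow_add two_pos, mul_zpow, zpow_add_one₀ (by positivity)]
  ring

theorem exists_dyadic_shell {δ d : ℝ} (hδ : 0 < δ) (hd : 0 < d) :
    ∃ n : ℤ, δ * 2 ^ n ≤ d ∧ d < δ * 2 ^ (n + 1) := by
  obtain ⟨n, hn⟩ := exists_mem_Ico_zpow (div_pos hd hδ) one_lt_two
  refine ⟨n, ?_, ?_⟩
  · rw [mul_comm, ← le_div_iff₀ hδ]; exact hn.1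
  · rw [mul_comm, ← div_lt_iff₀ hδ]; exact hn.2

variable {X : Type*} [MetricSpace X] [MeasurableSpace X] [OpensMeasurableSpace X]
  {ν : Measure X} {x : X} {M a γ δ : ℝ}

theorem setLIntegral_annulus_dist_rpow_le (hγ : 0 ≤ γ) {ρ R : ℝ} (hρ : 0 < ρ)
    (hR : ν (ball x R) ≤ ENNReal.ofReal (M * R ^ a)) :
    ∫⁻ y in ball x R \ ball x ρ, ENNReal.ofReal (dist x y ^ (-γ)) ∂ν
      ≤ ENNReal.ofReal (ρ ^ (-γ) * (M * R ^ a)) := by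
  calc ∫⁻ y in ball x R \ ball x ρ, ENNReal.ofReal (dist x y ^ (-γ)) ∂ν
      ≤ ∫⁻ _ in ball x R \ ball x ρ, ENNReal.ofReal (ρ ^ (-γ)) ∂ν := by
        refine setLIntegral_mono' (measurableSet_ball.diff measurableSet_ball) fun y hy => ?_
        have hρy : ρ ≤ dist x y := not_lt.1 fun h => hy.2 (mem_ball'.2 h)
        exact ENNReal.ofReal_le_ofReal (Real.rpow_le_rpow_of_nonpos hρ hρy (by linarith))
    _ ≤ ENNReal.ofReal (ρ ^ (-γ)) * ν (ball x R) := by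
        rw [setLIntegral_const]
        gcongr
        exact sdiff_subset
    _ ≤ ENNReal.ofReal (ρ ^ (-γ) * (M * R ^ a)) := by
        rw [ENNReal.ofReal_mul (by positivity)]
        gcongr

theorem setLIntegral_iUnion_dyadic_le (hγ : 0 ≤ γ) (hδ : 0 < δ) (hM : 0 ≤ M)
    (hν : ∀ s > 0, ν (ball x s) ≤ ENNReal.ofReal (M * s ^ a)) (e : ℕ → ℤ) {c q : ℝ} (hc : 0 ≤ c)
    (hq0 : 0 ≤ q) (hq : q < 1)
    (hterm : ∀ k, (δ * 2 ^ e k) ^ (-γ) * (δ * 2 ^ (e k + 1)) ^ a = c * q ^ k) :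
    ∫⁻ y in ⋃ k, ball x (δ * 2 ^ (e k + 1)) \ ball x (δ * 2 ^ e k),
        ENNReal.ofReal (dist x y ^ (-γ)) ∂ν
      ≤ ENNReal.ofReal (M * c / (1 - q)) := by
  calc _ ≤ ∑' k, ∫⁻ y in ball x (δ * 2 ^ (e k + 1)) \ ball x (δ * 2 ^ e k),
          ENNReal.ofReal (dist x y ^ (-γ)) ∂ν := lintegral_iUnion_le _ _
    _ ≤ ∑' k, ENNReal.ofReal (M * c * q ^ k) := by
        refine ENNReal.tsum_le_tsum fun k => ?_
        refine (setLIntegral_annulus_dist_rpow_le hγ (by positivity)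
          (hν _ (by positivity))).trans_eq ?_
        rw [mul_left_comm, hterm, mul_assoc]
    _ = ENNReal.ofReal (M * c / (1 - q)) := by
        rw [← ENNReal.ofReal_tsum_of_nonneg (fun k => by positivity)
          ((summable_geometric_of_lt_one hq0 hq).mul_left _), tsum_mul_left,
          tsum_geometric_of_lt_one hq0 hq, div_eq_mul_inv]

theorem setLIntegral_ball_dist_rpow_le (hγ : 0 < γ) (hγa : γ < a) (hδ : 0 < δ) (hM : 0 ≤ M)
    (hν : ∀ s > 0, ν (ball x s) ≤ ENNReal.ofReal (M * s ^ a)) :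
    ∫⁻ y in ball x δ, ENNReal.ofReal (dist x y ^ (-γ)) ∂ν
      ≤ ENNReal.ofReal (2 ^ γ / (1 - 2 ^ (γ - a)) * M * δ ^ (a - γ)) := by
  have hcover : ball x δ ⊆ {x} ∪ ⋃ k : ℕ,
      ball x (δ * 2 ^ (Int.negSucc k + 1)) \ ball x (δ * 2 ^ Int.negSucc k) := by
    intro y hy
    rcases eq_or_ne y x with rfl | hyx
    · exact Or.inl rfl
    obtain ⟨n, hn⟩ := exists_dyadic_shell hδ (dist_pos.2 hyx)
    have hn0 : n < 0 := by
      by_contra! h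
      have : δ ≤ δ * 2 ^ n := le_mul_of_one_le_right hδ.le (one_le_zpow₀ one_le_two h)
      exact (mem_ball.1 hy).not_ge (this.trans hn.1)
    obtain ⟨k, rfl⟩ := Int.eq_negSucc_of_lt_zero hn0
    exact Or.inr (mem_iUnion.2 ⟨k, mem_ball.2 hn.2, fun h => (mem_ball.1 h).not_ge hn.1⟩)
  have hq : (2 : ℝ) ^ (γ - a) < 1 := Real.rpow_lt_one_of_one_lt_of_neg one_lt_two (by linarith)
  calc ∫⁻ y in ball x δ, ENNReal.ofReal (dist x y ^ (-γ)) ∂ν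
      ≤ (∫⁻ y in {x}, ENNReal.ofReal (dist x y ^ (-γ)) ∂ν) + ∫⁻ y in ⋃ k : ℕ,
          ball x (δ * 2 ^ (Int.negSucc k + 1)) \ ball x (δ * 2 ^ Int.negSucc k),
          ENNReal.ofReal (dist x y ^ (-γ)) ∂ν :=
        (lintegral_mono_set hcover).trans (lintegral_union_le _ _ _)
    _ ≤ 0 + ENNReal.ofReal (M * (2 ^ γ * δ ^ (a - γ)) / (1 - 2 ^ (γ - a))) := by
        gcongr
        · simp [Real.zero_rpow (neg_ne_zero.2 hγ.ne')]
        refine setLIntegral_iUnion_dyadic_le hγ.le hδ hM hν _ (by positivity) (by positivity) hq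
          fun k => ?_
        rw [dyadic_term_eq hδ, Int.negSucc_eq, zpow_neg, ← inv_zpow, ← Real.rpow_neg two_pos.le,
          neg_sub,
          zpow_add_one₀ (by positivity), zpow_natCast, Real.rpow_sub two_pos]
        field_simp
    _ = ENNReal.ofReal (2 ^ γ / (1 - 2 ^ (γ - a)) * M * δ ^ (a - γ)) := by
        rw [zero_add]
        ring_nf

theorem setLIntegral_compl_ball_dist_rpow_le (hγ : 0 ≤ γ) (haγ : a < γ) (hδ : 0 < δ)
    (hM : 0 ≤ M) (hν : ∀ s > 0, ν (ball x s) ≤ ENNReal.ofReal (M * s ^ a)) :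
    ∫⁻ y in (ball x δ)ᶜ, ENNReal.ofReal (dist x y ^ (-γ)) ∂ν
      ≤ ENNReal.ofReal (2 ^ a / (1 - 2 ^ (a - γ)) * M * δ ^ (a - γ)) := by
  have hcover : (ball x δ)ᶜ ⊆ ⋃ k : ℕ,
      ball x (δ * 2 ^ ((k : ℤ) + 1)) \ ball x (δ * 2 ^ (k : ℤ)) := by
    intro y hy
    have hδy : δ ≤ dist y x := not_lt.1 hy
    obtain ⟨n, hn⟩ := exists_dyadic_shell hδ (hδ.trans_le hδy)
    have hn0 : 0 ≤ n := by
      by_contra! h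
      have : δ * 2 ^ (n + 1) ≤ δ :=
        mul_le_of_le_one_right hδ.le (zpow_le_one_of_nonpos₀ one_le_two (by omega))
      exact (hn.2.trans_le this).not_ge hδy
    obtain ⟨k, rfl⟩ := Int.eq_ofNat_of_zero_le hn0
    exact mem_iUnion.2 ⟨k, mem_ball.2 hn.2, fun h => (mem_ball.1 h).not_ge hn.1⟩
  have hq : (2 : ℝ) ^ (a - γ) < 1 := Real.rpow_lt_one_of_one_lt_of_neg one_lt_two (by linarith)
  calc ∫⁻ y in (ball x δ)ᶜ, ENNReal.ofReal (dist x y ^ (-γ)) ∂ν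
      ≤ ∫⁻ y in ⋃ k : ℕ, ball x (δ * 2 ^ ((k : ℤ) + 1)) \ ball x (δ * 2 ^ (k : ℤ)),
          ENNReal.ofReal (dist x y ^ (-γ)) ∂ν := lintegral_mono_set hcover
    _ ≤ ENNReal.ofReal (M * (2 ^ a * δ ^ (a - γ)) / (1 - 2 ^ (a - γ))) :=
        setLIntegral_iUnion_dyadic_le hγ hδ hM hν _ (by positivity) (by positivity) hq
          fun k => by rw [dyadic_term_eq hδ, zpow_natCast]
    _ = ENNReal.ofReal (2 ^ a / (1 - 2 ^ (a - γ)) * M * δ ^ (a - γ)) := by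
        ring_nf

section Potential

variable {μ : Measure X} {n β V : ℝ}

-- The kernel vanishes on the diagonal (`0 ^ s = 0` for `s ≠ 0`), as in `riesz`.
def rieszPotential (n β : ℝ) (ν : Measure X) (x : X) : ℝ≥0∞ :=
  ∫⁻ y, ENNReal.ofReal (dist x y ^ (-(n - β))) ∂ν

variable [SecondCountableTopology X]

theorem measurable_indicator_ball_dist_rpow (γ δ : ℝ) :
    Measurable fun p : X × X => (ball p.1 δ).indicator
      (fun y => ENNReal.ofReal (dist p.1 y ^ (-γ))) p.2 :=
  show Measurable ({p : X × X | dist p.2 p.1 < δ}.indicator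
      fun p => ENNReal.ofReal (dist p.1 p.2 ^ (-γ))) from
    (by fun_prop : Measurable fun p : X × X => ENNReal.ofReal (dist p.1 p.2 ^ (-γ))).indicator
      (measurableSet_lt (by fun_prop) measurable_const)

theorem setLIntegral_setLIntegral_ball_le [SFinite μ] [SFinite ν] (hβ : 0 < β) (hβn : β < n)
    (hV : 0 ≤ V) (hμ : ∀ y, ∀ s > 0, μ (ball y s) ≤ ENNReal.ofReal (V * s ^ n)) (hδ : 0 < δ)
    (x₀ : X) (r : ℝ) :
    ∫⁻ x in ball x₀ r, ∫⁻ y in ball x δ, ENNReal.ofReal (dist x y ^ (-(n - β))) ∂ν ∂μ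
      ≤ ENNReal.ofReal (2 ^ (n - β) / (1 - 2 ^ (-β)) * V * δ ^ β) * ν (ball x₀ (r + δ)) := by
  set C := ENNReal.ofReal (2 ^ (n - β) / (1 - 2 ^ (-β)) * V * δ ^ β)
  have hnear : ∀ y, ∫⁻ x in ball y δ, ENNReal.ofReal (dist x y ^ (-(n - β))) ∂μ ≤ C := by
    intro y
    simp_rw [dist_comm _ y]
    convert setLIntegral_ball_dist_rpow_le (γ := n - β) (a := n) (by linarith) (by linarith) hδ hV
      (hμ y) using 3 <;> ring_nf
  calc ∫⁻ x in ball x₀ r, ∫⁻ y in ball x δ, ENNReal.ofReal (dist x y ^ (-(n - β))) ∂ν ∂μ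
      = ∫⁻ x in ball x₀ r, ∫⁻ y, (ball x δ).indicator
          (fun y => ENNReal.ofReal (dist x y ^ (-(n - β)))) y ∂ν ∂μ := by
        simp_rw [lintegral_indicator measurableSet_ball]
    _ = ∫⁻ y, ∫⁻ x in ball x₀ r, (ball x δ).indicator
          (fun y => ENNReal.ofReal (dist x y ^ (-(n - β)))) y ∂μ ∂ν :=
        lintegral_lintegral_swap (measurable_indicator_ball_dist_rpow _ δ).aemeasurable
    _ ≤ ∫⁻ y, (ball x₀ (r + δ)).indicator (fun _ => C) y ∂ν := by
        refine lintegral_mono fun y => ?_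
        by_cases hy : y ∈ ball x₀ (r + δ)
        · rw [indicator_of_mem hy]
          calc _ = ∫⁻ x in ball x₀ r, (ball y δ).indicator
                  (fun x => ENNReal.ofReal (dist x y ^ (-(n - β)))) x ∂μ := by
                refine lintegral_congr fun x => ?_
                by_cases h : y ∈ ball x δ
                · rw [indicator_of_mem h, indicator_of_mem (mem_ball_comm.1 h)]
                · rw [indicator_of_notMem h, indicator_of_notMem (mt mem_ball_comm.1 h)]
            _ ≤ ∫⁻ x, (ball y δ).indicator
                  (fun x => ENNReal.ofReal (dist x y ^ (-(n - β)))) x ∂μ :=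
                setLIntegral_le_lintegral _ _
            _ ≤ C := (lintegral_indicator measurableSet_ball _).trans_le (hnear y)
        · rw [indicator_of_notMem hy]
          refine (setLIntegral_congr_fun (g := fun _ => 0) measurableSet_ball
            fun x hx => ?_).trans_le lintegral_zero.le
          refine indicator_of_notMem (fun hyx => hy ?_) _
          exact mem_ball.2 (by linarith [dist_triangle y x x₀, mem_ball.1 hx, mem_ball.1 hyx])
    _ = C * ν (ball x₀ (r + δ)) := lintegral_indicator_const measurableSet_ball C

theorem measure_lt_rieszPotential_le_of_far_le [SFinite μ] [SFinite ν] (hβ : 0 < β) (hβn : β < n)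
    (hV : 0 ≤ V) (hμ : ∀ y, ∀ s > 0, μ (ball y s) ≤ ENNReal.ofReal (V * s ^ n)) (hδ : 0 < δ)
    {x₀ : X} {r t : ℝ} (ht : 0 ≤ t)
    (hfar : ∀ x ∈ ball x₀ r,
      ∫⁻ y in (ball x δ)ᶜ, ENNReal.ofReal (dist x y ^ (-(n - β))) ∂ν ≤ ENNReal.ofReal (t / 2)) :
    ENNReal.ofReal (t / 2) * μ {x ∈ ball x₀ r | ENNReal.ofReal t < rieszPotential n β ν x}
      ≤ ENNReal.ofReal (2 ^ (n - β) / (1 - 2 ^ (-β)) * V * δ ^ β) * ν (ball x₀ (r + δ)) := by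
  set near := fun x => ∫⁻ y in ball x δ, ENNReal.ofReal (dist x y ^ (-(n - β))) ∂ν
  have hnear : Measurable near := by
    simpa only [near, lintegral_indicator measurableSet_ball] using
      (measurable_indicator_ball_dist_rpow (n - β) δ).lintegral_prod_right' (ν := ν)
  have hsub : {x ∈ ball x₀ r | ENNReal.ofReal t < rieszPotential n β ν x}
      ⊆ {x | ENNReal.ofReal (t / 2) ≤ near x} ∩ ball x₀ r := by
    rintro x ⟨hx, hxt⟩
    refine ⟨(not_lt.1 fun hlt => hxt.not_ge ?_ : ENNReal.ofReal (t / 2) ≤ near x), hx⟩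
    rw [rieszPotential, ← lintegral_add_compl _ measurableSet_ball, ← add_halves t,
      ENNReal.ofReal_add (by linarith) (by linarith)]
    exact add_le_add hlt.le (hfar x hx)
  calc ENNReal.ofReal (t / 2) * μ {x ∈ ball x₀ r | ENNReal.ofReal t < rieszPotential n β ν x}
      ≤ ENNReal.ofReal (t / 2) * μ.restrict (ball x₀ r) {x | ENNReal.ofReal (t / 2) ≤ near x} := by
        rw [Measure.restrict_apply' measurableSet_ball]
        gcongr
    _ ≤ ∫⁻ x in ball x₀ r, near x ∂μ := mul_meas_ge_le_lintegral₀ hnear.aemeasurable _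
    _ ≤ _ := setLIntegral_setLIntegral_ball_le hβ hβn hV hμ hδ x₀ r

theorem one_le_two_rpow_div_one_sub (hβ : 0 < β) (hβn : β ≤ n) :
    1 ≤ 2 ^ (n - β) / (1 - 2 ^ (-β) : ℝ) := by
  rw [le_div_iff₀ (sub_pos.2 (Real.rpow_lt_one_of_one_lt_of_neg one_lt_two (by linarith)))]
  linarith [Real.one_le_rpow one_le_two (by linarith : 0 ≤ n - β),
    Real.rpow_pos_of_pos two_pos (-β)]

theorem measure_lt_rieszPotential_le_rpow_of_lt [SFinite μ] [SFinite ν] {lam : ℝ} (hβ : 0 < β)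
    (hβlam : β < lam) (hlam : lam ≤ n) (hV : 0 ≤ V)
    (hμ : ∀ y, ∀ s > 0, μ (ball y s) ≤ ENNReal.ofReal (V * s ^ n)) (hM : 0 < M)
    (hν : ∀ x, ∀ s > 0, ν (ball x s) ≤ ENNReal.ofReal (M * s ^ (n - lam))) (hδ : 0 < δ)
    (x₀ : X) {r : ℝ} (hδr : δ < r) :
    μ {x ∈ ball x₀ r |
        ENNReal.ofReal (2 * (2 ^ (n - lam) / (1 - 2 ^ (β - lam)) * M * δ ^ (β - lam)))
          < rieszPotential n β ν x}
      ≤ ENNReal.ofReal (2 ^ (n - β) / (1 - 2 ^ (-β)) * V * δ ^ lam * r ^ (n - lam)) := by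
  set Cn : ℝ := 2 ^ (n - β) / (1 - 2 ^ (-β))
  set Cf : ℝ := 2 ^ (n - lam) / (1 - 2 ^ (β - lam))
  have hr : 0 < r := hδ.trans hδr
  have hq : (2 : ℝ) ^ (β - lam) < 1 := Real.rpow_lt_one_of_one_lt_of_neg one_lt_two (by linarith)
  have hCf : 0 < Cf := div_pos (by positivity) (sub_pos.2 hq)
  have hCn : 0 ≤ Cn := zero_le_one.trans (one_le_two_rpow_div_one_sub hβ (by linarith))
  have hfar : ∀ x ∈ ball x₀ r, ∫⁻ y in (ball x δ)ᶜ, ENNReal.ofReal (dist x y ^ (-(n - β))) ∂ν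
      ≤ ENNReal.ofReal (2 * (Cf * M * δ ^ (β - lam)) / 2) := fun x _ => by
    rw [mul_div_cancel_left₀ _ two_ne_zero]
    have := setLIntegral_compl_ball_dist_rpow_le (γ := n - β) (by linarith) (by linarith) hδ hM.le
      (hν x)
    rwa [show n - lam - (n - β) = β - lam by ring] at this
  have hcheb := measure_lt_rieszPotential_le_of_far_le hβ (by linarith) hV hμ hδ
    (by positivity) hfar
  rw [mul_div_cancel_left₀ _ two_ne_zero] at hcheb
  have hball : ν (ball x₀ (r + δ)) ≤ ENNReal.ofReal (M * (2 * r) ^ (n - lam)) :=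
    (hν _ _ (by linarith)).trans (ENNReal.ofReal_le_ofReal (by gcongr; linarith))
  have hsplit : Cn * V * δ ^ β * (M * (2 * r) ^ (n - lam))
      = Cf * M * δ ^ (β - lam) * (Cn * V * δ ^ lam * r ^ (n - lam) * (1 - 2 ^ (β - lam))) := by
    rw [Real.mul_rpow two_pos.le (by linarith), show β = β - lam + lam by ring, Real.rpow_add hδ,
      add_sub_cancel_right]
    have : 1 - (2 : ℝ) ^ (β - lam) ≠ 0 := (sub_pos.2 hq).ne'
    simp only [Cf]
    field_simp
  have hlevel : ENNReal.ofReal (Cf * M * δ ^ (β - lam)) ≠ 0 :=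
    (ENNReal.ofReal_pos.2 (by positivity)).ne'
  refine ((ENNReal.mul_le_mul_iff_right hlevel ENNReal.ofReal_ne_top).1 ?_).trans
    (ENNReal.ofReal_le_ofReal (mul_le_of_le_one_right (by positivity)
      (sub_le_self 1 (Real.rpow_nonneg zero_le_two (β - lam)))))
  rw [← ENNReal.ofReal_mul (by positivity), ← hsplit,
    ENNReal.ofReal_mul (p := Cn * V * δ ^ β) (by positivity)]
  exact hcheb.trans (by gcongr)

theorem measure_lt_rieszPotential_le_rpow [SFinite μ] [SFinite ν] {lam : ℝ} (hβ : 0 < β)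
    (hβlam : β < lam) (hlam : lam ≤ n) (hV : 0 ≤ V)
    (hμ : ∀ y, ∀ s > 0, μ (ball y s) ≤ ENNReal.ofReal (V * s ^ n)) (hM : 0 < M)
    (hν : ∀ x, ∀ s > 0, ν (ball x s) ≤ ENNReal.ofReal (M * s ^ (n - lam))) (hδ : 0 < δ)
    (x₀ : X) {r : ℝ} (hr : 0 < r) :
    μ {x ∈ ball x₀ r |
        ENNReal.ofReal (2 * (2 ^ (n - lam) / (1 - 2 ^ (β - lam)) * M * δ ^ (β - lam)))
          < rieszPotential n β ν x}
      ≤ ENNReal.ofReal (2 ^ (n - β) / (1 - 2 ^ (-β)) * V * δ ^ lam * r ^ (n - lam)) := by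
  rcases lt_or_ge δ r with hδr | hrδ
  · exact measure_lt_rieszPotential_le_rpow_of_lt hβ hβlam hlam hV hμ hM hν hδ x₀ hδr
  calc _ ≤ μ (ball x₀ r) := measure_mono (sep_subset _ _)
    _ ≤ ENNReal.ofReal (V * r ^ n) := hμ x₀ r hr
    _ ≤ _ := by
        refine ENNReal.ofReal_le_ofReal ?_
        have hCn := one_le_two_rpow_div_one_sub hβ (hβlam.le.trans hlam)
        have hrn : r ^ n = r ^ lam * r ^ (n - lam) := by
          rw [← Real.rpow_add hr, add_sub_cancel]
        rw [hrn, ← mul_assoc]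
        gcongr
        · exact le_mul_of_one_le_left hV hCn
        · linarith

theorem exists_measure_lt_rieszPotential_le [SFinite μ] {lam : ℝ} (hβ : 0 < β) (hβlam : β < lam)
    (hlam : lam ≤ n) (hV : 0 < V) (hμ : ∀ y, ∀ s > 0, μ (ball y s) ≤ ENNReal.ofReal (V * s ^ n)) :
    ∃ A > 0, ∀ (ν : Measure X) [SFinite ν] (M : ℝ), 0 ≤ M →
      (∀ x, ∀ s > 0, ν (ball x s) ≤ ENNReal.ofReal (M * s ^ (n - lam))) →
      ∀ (x₀ : X) {r t : ℝ}, 0 < r → 0 < t →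
        μ {x ∈ ball x₀ r | ENNReal.ofReal t < rieszPotential n β ν x}
          ≤ ENNReal.ofReal (A * (M / t) ^ (lam / (lam - β)) * r ^ (n - lam)) := by
  set Cf : ℝ := 2 ^ (n - lam) / (1 - 2 ^ (β - lam))
  have hCf : 0 < Cf := div_pos (by positivity)
    (sub_pos.2 (Real.rpow_lt_one_of_one_lt_of_neg one_lt_two (by linarith)))
  have hCn : 0 < 2 ^ (n - β) / (1 - 2 ^ (-β) : ℝ) := div_pos (by positivity)
    (sub_pos.2 (Real.rpow_lt_one_of_one_lt_of_neg one_lt_two (by linarith)))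
  refine ⟨2 ^ (n - β) / (1 - 2 ^ (-β)) * V * (2 * Cf) ^ (lam / (lam - β)), by positivity, ?_⟩
  intro ν _ M hM hν x₀ r t hr ht
  rcases hM.eq_or_lt with rfl | hM
  · have hν0 : ν = 0 := by
      rw [← Measure.measure_univ_eq_zero, ← iUnion_ball_nat_succ x₀]
      exact measure_iUnion_null fun k => le_zero_iff.1 ((hν x₀ _ (by positivity)).trans (by simp))
    simp [rieszPotential, hν0]
  have hlamβ : lam - β ≠ 0 := by linarith
  set δ := (2 * Cf * M / t) ^ (lam - β)⁻¹
  have hδ : 0 < δ := by positivity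
  have hδpow : δ ^ (lam - β) = 2 * Cf * M / t := Real.rpow_inv_rpow (by positivity) hlamβ
  have ht_eq : t = 2 * (Cf * M * δ ^ (β - lam)) := by
    rw [← neg_sub, Real.rpow_neg hδ.le, hδpow]
    field_simp
  have hδlam : δ ^ lam = (2 * Cf) ^ (lam / (lam - β)) * (M / t) ^ (lam / (lam - β)) := by
    rw [← Real.mul_rpow (by positivity) (by positivity), ← mul_div_assoc, ← hδpow,
      ← Real.rpow_mul hδ.le, mul_div_cancel₀ _ hlamβ]
  calc μ {x ∈ ball x₀ r | ENNReal.ofReal t < rieszPotential n β ν x}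
      = μ {x ∈ ball x₀ r | ENNReal.ofReal (2 * (Cf * M * δ ^ (β - lam)))
          < rieszPotential n β ν x} := by rw [← ht_eq]
    _ ≤ ENNReal.ofReal (2 ^ (n - β) / (1 - 2 ^ (-β)) * V * δ ^ lam * r ^ (n - lam)) :=
        measure_lt_rieszPotential_le_rpow hβ hβlam hlam hV.le hμ hM hν hδ x₀ hr
    _ = _ := by rw [hδlam]; ring_nf

end Potential

end Adams

open Adams

theorem addHaar_ball_eq_ofReal {E : Type*} [NormedAddCommGroup E] [NormedSpace ℝ E]
    [MeasurableSpace E] [BorelSpace E] [FiniteDimensional ℝ E] [Nontrivial E] (μ : Measure E)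
    [μ.IsAddHaarMeasure] (x : E) {s : ℝ} (hs : 0 ≤ s) :
    μ (ball x s) = ENNReal.ofReal ((μ (ball 0 1)).toReal * s ^ (Module.finrank ℝ E : ℝ)) := by
  rw [Measure.addHaar_ball μ x hs, mul_comm, ENNReal.ofReal_mul ENNReal.toReal_nonneg,
    ENNReal.ofReal_toReal measure_ball_lt_top.ne, Real.rpow_natCast]

theorem MemMorrey.integrable {lam : ℝ} {f : E4 → ℝ} (hf : MemMorrey univ 1 lam f) :
    Integrable f :=
  memLp_one_iff_integrable.1 (by simpa [MemLpOn] using hf.1)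

theorem setIntegral_abs_le_morreyNorm {lam : ℝ} {f : E4 → ℝ} (hf : MemMorrey univ 1 lam f)
    (x : E4) {s : ℝ} (hs : 0 < s) :
    ∫ y in ball x s, |f y| ≤ morreyNorm univ 1 lam f * s ^ (4 - lam) := by
  have hmem : s ^ (lam - 4) * ∫ y in ball x s, |f y| ^ (1 : ℝ) ∈ morreySet univ 1 lam f :=
    ⟨x, s, hs, subset_univ _, rfl⟩
  have hle := le_csSup hf.2 hmem
  simp only [Real.rpow_one] at hle
  rw [morreyNorm, div_one, Real.rpow_one, ← div_le_iff₀ (by positivity), div_eq_mul_inv,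
    ← Real.rpow_neg hs.le, neg_sub, mul_comm]
  exact hle

theorem morreyNorm_nonneg {lam : ℝ} {f : E4 → ℝ} (hf : MemMorrey univ 1 lam f) :
    0 ≤ morreyNorm univ 1 lam f :=
  nonneg_of_mul_nonneg_left
    ((integral_nonneg fun _ => abs_nonneg _).trans (setIntegral_abs_le_morreyNorm hf 0 one_pos))
    (by positivity)

theorem withDensity_abs_ball_le_morreyNorm {lam : ℝ} {f : E4 → ℝ} (hf : MemMorrey univ 1 lam f)
    (x : E4) {s : ℝ} (hs : 0 < s) :
    volume.withDensity (fun y => ENNReal.ofReal |f y|) (ball x s)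
      ≤ ENNReal.ofReal (morreyNorm univ 1 lam f * s ^ (4 - lam)) := by
  rw [withDensity_apply _ measurableSet_ball, ← ofReal_integral_eq_lintegral_ofReal
    hf.integrable.abs.integrableOn (ae_of_all _ fun _ => abs_nonneg _)]
  exact ENNReal.ofReal_le_ofReal (setIntegral_abs_le_morreyNorm hf x hs)

theorem abs_riesz_le_rieszPotential {β : ℝ} {f : E4 → ℝ} (hf : AEMeasurable f) (x : E4) :
    |riesz β f x|
      ≤ (rieszPotential 4 β (volume.withDensity fun y => ENNReal.ofReal |f y|) x).toReal := by
  rw [rieszPotential, lintegral_withDensity_eq_lintegral_mul₀ (μ := volume)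
    (by fun_prop : AEMeasurable fun y => ENNReal.ofReal |f y|) (by fun_prop),
    ← Real.norm_eq_abs]
  refine (norm_integral_le_lintegral_norm _).trans_eq (congrArg _ (lintegral_congr fun y => ?_))
  rw [Pi.mul_apply, ← ENNReal.ofReal_mul (abs_nonneg _), Real.norm_eq_abs, abs_div,
    abs_of_nonneg (by positivity : 0 ≤ ‖x - y‖ ^ (4 - β)), div_eq_mul_inv,
    ← Real.rpow_neg (norm_nonneg _), dist_eq_norm]

theorem aestronglyMeasurable_riesz {β : ℝ} {f : E4 → ℝ} (hf : AEMeasurable f) :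
    AEStronglyMeasurable (riesz β f) := by
  have hker : AEMeasurable (fun p : E4 × E4 => f p.2 / ‖p.1 - p.2‖ ^ (4 - β))
      (volume.prod volume) := hf.comp_snd.div (by fun_prop)
  exact hker.aestronglyMeasurable.integral_prod_right'

theorem weakLpNorm_le_of_forall_le {s : Set E4} {p B : ℝ} {F : E4 → ℝ}
    (h : ∀ t > 0, t * (volume {x ∈ s | t < |F x|}).toReal ^ (1 / p) ≤ B) :
    BddAbove (weakLpSet s p F) ∧ 0 ≤ weakLpNorm s p F ∧ weakLpNorm s p F ≤ B := by
  have hB : ∀ v ∈ weakLpSet s p F, v ≤ B := by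
    rintro _ ⟨t, ht, rfl⟩
    exact h t ht
  have hone : 1 * (volume {x ∈ s | 1 < |F x|}).toReal ^ (1 / p) ∈ weakLpSet s p F :=
    ⟨1, one_pos, rfl⟩
  exact ⟨⟨B, hB⟩, (by positivity : (0 : ℝ) ≤ _).trans (le_csSup ⟨B, hB⟩ hone),
    csSup_le ⟨_, hone⟩ hB⟩

theorem memWeakMorrey_of_measure_lt_le {F : E4 → ℝ} {p lam A M : ℝ} (hp : 0 < p) (hA : 0 ≤ A)
    (hM : 0 ≤ M) (hF : AEStronglyMeasurable F)
    (h : ∀ (x₀ : E4) {r t : ℝ}, 0 < r → 0 < t →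
      volume {x ∈ ball x₀ r | t < |F x|} ≤ ENNReal.ofReal (A * (M / t) ^ p * r ^ (4 - lam))) :
    MemWeakMorrey univ p lam F ∧ weakMorreyNorm univ p lam F ≤ A ^ (1 / p) * M := by
  set B := A ^ (1 / p) * M
  have hball : ∀ (x₀ : E4) {r : ℝ}, 0 < r → BddAbove (weakLpSet (ball x₀ r) p F) ∧
      0 ≤ weakLpNorm (ball x₀ r) p F ∧ weakLpNorm (ball x₀ r) p F ≤ B * r ^ ((4 - lam) / p) := by
    refine fun x₀ r hr => weakLpNorm_le_of_forall_le fun t ht => ?_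
    calc t * (volume {x ∈ ball x₀ r | t < |F x|}).toReal ^ (1 / p)
        ≤ t * (A * (M / t) ^ p * r ^ (4 - lam)) ^ (1 / p) := by
          gcongr
          exact ENNReal.toReal_le_of_le_ofReal (by positivity) (h x₀ hr ht)
      _ = B * r ^ ((4 - lam) / p) := by
          rw [Real.mul_rpow (by positivity) (by positivity), Real.mul_rpow hA (by positivity),
            ← Real.rpow_mul (by positivity), ← Real.rpow_mul hr.le, mul_one_div_cancel hp.ne',
            Real.rpow_one, mul_one_div]
          field_simp
          rfl
  have hmorrey : ∀ v ∈ weakMorreySet univ p lam F, v ≤ B ^ p := by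
    rintro _ ⟨x₀, r, hr, -, rfl⟩
    obtain ⟨-, hnonneg, hle⟩ := hball x₀ hr
    calc r ^ (lam - 4) * weakLpNorm (ball x₀ r) p F ^ p
        ≤ r ^ (lam - 4) * (B * r ^ ((4 - lam) / p)) ^ p := by gcongr
      _ = B ^ p := by
          rw [Real.mul_rpow (by positivity) (by positivity), ← Real.rpow_mul hr.le,
            div_mul_cancel₀ _ hp.ne', mul_left_comm, ← Real.rpow_add hr, sub_add_sub_cancel',
            sub_self, Real.rpow_zero, mul_one]
  have hbdd : BddAbove (weakMorreySet univ p lam F) := ⟨_, hmorrey⟩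
  have hunit : (1 : ℝ) ^ (lam - 4) * weakLpNorm (ball 0 1) p F ^ p ∈ weakMorreySet univ p lam F :=
    ⟨0, 1, one_pos, subset_univ _, rfl⟩
  refine ⟨⟨by rwa [Measure.restrict_univ], fun x₀ r hr _ => (hball x₀ hr).1, hbdd⟩, ?_⟩
  calc weakMorreyNorm univ p lam F ≤ (B ^ p) ^ (1 / p) :=
        Real.rpow_le_rpow (le_csSup_of_le hbdd hunit (by have := (hball 0 one_pos).2.1; positivity))
          (csSup_le ⟨_, hunit⟩ hmorrey) (by positivity)
    _ = B := by rw [← Real.rpow_mul (by positivity), mul_one_div_cancel hp.ne', Real.rpow_one]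

/-- Adams' Riesz potential estimate between Morrey spaces on `ℝ⁴`
(weak form, for `M^{1,λ}`). -/
theorem statement7 (β lam : ℝ) (hβ : 0 < β) (hβlam : β < lam) (hlam : lam ≤ 4) :
    ∃ C > (0:ℝ), ∀ f : E4 → ℝ, MemMorrey univ 1 lam f →
      MemWeakMorrey univ (lam / (lam - β)) lam (riesz β f) ∧
      weakMorreyNorm univ (lam / (lam - β)) lam (riesz β f)
        ≤ C * morreyNorm univ 1 lam f := by
  have hV : 0 < (volume (ball (0 : E4) 1)).toReal :=
    ENNReal.toReal_pos (measure_ball_pos _ _ one_pos).ne' measure_ball_lt_top.ne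
  obtain ⟨A, hA, hadams⟩ := exists_measure_lt_rieszPotential_le (μ := (volume : Measure E4))
    (n := 4) hβ hβlam hlam hV fun y s hs => by
      rw [addHaar_ball_eq_ofReal volume y hs.le, finrank_euclideanSpace_fin, Nat.cast_ofNat]
  refine ⟨A ^ (1 / (lam / (lam - β))), by positivity, fun f hf => ?_⟩
  have hfm := hf.integrable.aemeasurable
  refine memWeakMorrey_of_measure_lt_le (div_pos (by linarith) (by linarith)) hA.le
    (morreyNorm_nonneg hf) (aestronglyMeasurable_riesz hfm) fun x₀ r t hr ht => ?_
  set ν := volume.withDensity fun y => ENNReal.ofReal |f y|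
  have hsub : {x ∈ ball x₀ r | t < |riesz β f x|}
      ⊆ {x ∈ ball x₀ r | ENNReal.ofReal t < rieszPotential 4 β ν x} :=
    fun x hx => ⟨hx.1, not_le.1 fun hle => hx.2.not_ge <|
      (abs_riesz_le_rieszPotential hfm x).trans (ENNReal.toReal_le_of_le_ofReal ht.le hle)⟩
  exact (measure_mono hsub).trans
    (hadams ν _ (morreyNorm_nonneg hf) (withDensity_abs_ball_le_morreyNorm hf) x₀ hr ht)
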